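/- arXiv:math/0101029 — 4 statements merged into one kernel-verified Lean document; each statement's English description precedes it below -/
import Mathlib

section
/- For every a > 0, the Gaussian tail integral satisfies ∫_{a}^{∞} e^{-x²/2} dx ≤ 2 e^{-a²/2} / (√(a²+2) + a). -/
open Real MeasureTheory Filter

noncomputable def komg (x : ℝ) : ℝ := Real.exp (-x^2/2) * (Real.sqrt (x^2+2) - x)

noncomputable def komd (x : ℝ) : ℝ :=
  Real.exp (-x^2/2) * (-x) * (Real.sqrt (x^2+2) - x)
    + Real.exp (-x^2/2) * (x / Real.sqrt (x^2+2) - 1)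

lemma komsq (x : ℝ) : Real.sqrt (x^2+2) ^ 2 = x^2 + 2 :=
  Real.sq_sqrt (by positivity)

lemma komspos (x : ℝ) : 0 < Real.sqrt (x^2+2) :=
  Real.sqrt_pos.2 (by positivity)

lemma komg_deriv (x : ℝ) : HasDerivAt komg (komd x) x := by
  have hs : HasDerivAt (fun x : ℝ => Real.sqrt (x^2+2)) (x / Real.sqrt (x^2+2)) x := by
    have h1 : HasDerivAt (fun x : ℝ => x^2+2) (2*x) x := by
      simpa using ((hasDerivAt_pow 2 x).add_const 2)
    have := (Real.hasDerivAt_sqrt (x := x^2+2) (by positivity)).comp x h1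
    refine this.congr_deriv ?_
    have := komspos x
    field_simp
  have he : HasDerivAt (fun x : ℝ => Real.exp (-x^2/2)) (Real.exp (-x^2/2) * (-x)) x := by
    have h1 : HasDerivAt (fun x : ℝ => -x^2/2) (-x) x := by
      have : HasDerivAt (fun x : ℝ => -x^2/2) (-(2*x)/2) x := by
        exact (((hasDerivAt_pow 2 x).neg).div_const 2).congr_deriv (by ring)
      simpa using this.congr_deriv (by ring)
    exact (Real.hasDerivAt_exp (-x^2/2)).comp x h1
  exact he.mul (hs.sub (hasDerivAt_id x))

lemma komd_cont : Continuous komd := by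
  have hs : Continuous fun x : ℝ => Real.sqrt (x^2+2) :=
    Real.continuous_sqrt.comp (by continuity)
  apply Continuous.add
  · exact ((Real.continuous_exp.comp (by continuity)).mul continuous_neg).mul
      (hs.sub continuous_id)
  · exact (Real.continuous_exp.comp (by continuity)).mul
      ((continuous_id.div hs fun x => (komspos x).ne').sub continuous_const)

lemma komd_le (x : ℝ) (hx : 0 < x) : Real.exp (-x^2/2) ≤ -komd x := by
  have hs := komsq x
  have hs0 := komspos x
  set s := Real.sqrt (x^2+2)
  have key : x / s ≤ x * (s - x) := by
    rw [div_le_iff₀ hs0]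
    have hxs : x * s ≤ x^2 + 1 := by nlinarith [sq_nonneg (x*s - x^2 - 1), sq_nonneg (x^2+1)]
    nlinarith [mul_le_mul_of_nonneg_left hxs hx.le]
  have he : 0 < Real.exp (-x^2/2) := Real.exp_pos _
  have : -komd x = Real.exp (-x^2/2) * (x * (s - x) - x / s + 1) := by
    unfold komd; ring
  rw [this]
  nlinarith

lemma komg_nonneg (x : ℝ) (hx : 0 ≤ x) : 0 ≤ komg x := by
  have : x ≤ Real.sqrt (x^2+2) := by
    nlinarith [komsq x, komspos x]
  unfold komg
  have := Real.exp_pos (-x^2/2)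
  nlinarith

theorem komatsu_upper (a : ℝ) (ha : 0 < a) :
    ∫ x in Set.Ici a, Real.exp (-x^2/2) ≤
      2 * Real.exp (-a^2/2) / (Real.sqrt (a^2 + 2) + a) := by
  have hint : Integrable fun x : ℝ => Real.exp (-x^2/2) := by
    have := integrable_exp_neg_mul_sq (b := (1/2 : ℝ)) (by norm_num)
    convert this using 2 with x
    ring_nf
  have hbound : 2 * Real.exp (-a^2/2) / (Real.sqrt (a^2 + 2) + a) = komg a := by
    have hs := komsq a
    have hs0 := komspos a
    rw [div_eq_iff (by positivity)]
    unfold komg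
    nlinarith [Real.exp_pos (-a^2/2)]
  rw [hbound, MeasureTheory.integral_Ici_eq_integral_Ioi]
  have htend : Tendsto (fun T => ∫ x in a..T, Real.exp (-x^2/2)) atTop
      (nhds (∫ x in Set.Ioi a, Real.exp (-x^2/2))) :=
    MeasureTheory.intervalIntegral_tendsto_integral_Ioi a hint.integrableOn tendsto_id
  refine le_of_tendsto htend (Filter.eventually_atTop.2 ⟨a, fun T hT => ?_⟩)
  have hftc : ∫ x in a..T, komd x = komg T - komg a :=
    intervalIntegral.integral_eq_sub_of_hasDerivAt
      (fun x _ => komg_deriv x) (komd_cont.intervalIntegrable a T)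
  have hmono : ∫ x in a..T, Real.exp (-x^2/2) ≤ ∫ x in a..T, -komd x := by
    apply intervalIntegral.integral_mono_on hT
      ((Continuous.intervalIntegrable (by continuity) a T)) (komd_cont.neg.intervalIntegrable a T)
    intro x hx
    exact komd_le x (lt_of_lt_of_le ha hx.1)
  calc ∫ x in a..T, Real.exp (-x^2/2) ≤ ∫ x in a..T, -komd x := hmono
    _ = -(komg T - komg a) := by rw [intervalIntegral.integral_neg, hftc]
    _ ≤ komg a := by
        have := komg_nonneg T (le_trans ha.le hT)
        linarith
end

section
/- For every a > 0, the Gaussian tail integral satisfies ∫_{a}^{∞} e^{-x²/2} dx ≥ 2 e^{-a²/2} / (√(a²+4) + a). -/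
open Real MeasureTheory Set Filter Topology

noncomputable def kF (x : ℝ) : ℝ := Real.exp (-x^2/2) * (Real.sqrt (x^2+4) - x) / 2

noncomputable def kF' (x : ℝ) : ℝ :=
  Real.exp (-x^2/2) * ((-x) * (Real.sqrt (x^2+4) - x) + (x / Real.sqrt (x^2+4) - 1)) / 2

lemma kS_pos (x : ℝ) : (0:ℝ) < Real.sqrt (x^2+4) := Real.sqrt_pos.2 (by positivity)

lemma kS_sq (x : ℝ) : Real.sqrt (x^2+4) ^ 2 = x^2 + 4 := Real.sq_sqrt (by positivity)

lemma kS_ge (x : ℝ) : x < Real.sqrt (x^2+4) := by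
  nlinarith [kS_pos x, kS_sq x]

lemma kHasDeriv (x : ℝ) : HasDerivAt kF (kF' x) x := by
  have h1 : HasDerivAt (fun x : ℝ => -x^2/2) (-x) x := by
    have := ((hasDerivAt_pow 2 x).neg).div_const 2
    simpa using this.congr_deriv (by ring)
  have hexp : HasDerivAt (fun x : ℝ => Real.exp (-x^2/2)) (Real.exp (-x^2/2) * (-x)) x :=
    (Real.hasDerivAt_exp _).comp x h1
  have hin : HasDerivAt (fun x : ℝ => x^2 + 4) (2*x) x := by
    simpa using (hasDerivAt_pow 2 x).add_const 4
  have hs : HasDerivAt (fun x : ℝ => Real.sqrt (x^2+4)) (x / Real.sqrt (x^2+4)) x := by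
    have := (Real.hasDerivAt_sqrt (by positivity : x^2+4 ≠ 0)).comp x hin
    refine this.congr_deriv ?_
    field_simp
  have hsm : HasDerivAt (fun x : ℝ => Real.sqrt (x^2+4) - x) (x / Real.sqrt (x^2+4) - 1) x :=
    hs.sub (hasDerivAt_id x)
  have := (hexp.mul hsm).div_const 2
  unfold kF kF'
  refine this.congr_deriv ?_
  ring

theorem komatsu_lower (a : ℝ) (ha : 0 < a) :
    2 * Real.exp (-a^2/2) / (Real.sqrt (a^2 + 4) + a) ≤
      ∫ x in Set.Ici a, Real.exp (-x^2/2) := by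
  have hsa := kS_pos a
  have hneg : ∀ x ∈ Ioi a, kF' x ≤ 0 := by
    intro x hx
    have hx0 : 0 < x := ha.trans hx
    have hs := kS_pos x
    have hxs := kS_ge x
    have h1 : x / Real.sqrt (x^2+4) - 1 ≤ 0 := by
      rw [sub_nonpos, div_le_one hs]; linarith
    have h2 : (-x) * (Real.sqrt (x^2+4) - x) ≤ 0 := by nlinarith
    have he : (0:ℝ) < Real.exp (-x^2/2) := Real.exp_pos _
    unfold kF'
    nlinarith
  have htend : Tendsto kF atTop (𝓝 0) := by
    have hub : ∀ᶠ x in atTop, kF x ≤ Real.exp (-x^2/2) := by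
      filter_upwards [eventually_ge_atTop (0:ℝ)] with x hx
      have hs := kS_pos x
      have hs2 := kS_sq x
      have h4 : (2:ℝ) ≤ Real.sqrt (x^2+4) := by nlinarith
      have h5 : Real.sqrt (x^2+4) - x ≤ 2 := by nlinarith
      have he : (0:ℝ) < Real.exp (-x^2/2) := Real.exp_pos _
      unfold kF
      nlinarith
    have hlb : ∀ᶠ x in atTop, 0 ≤ kF x := by
      filter_upwards with x
      have hxs := kS_ge x
      have he : (0:ℝ) < Real.exp (-x^2/2) := Real.exp_pos _
      unfold kF
      nlinarith
    have hexp0 : Tendsto (fun x : ℝ => Real.exp (-x^2/2)) atTop (𝓝 0) := by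
      apply Real.tendsto_exp_atBot.comp
      have h : Tendsto (fun x : ℝ => x^2/2) atTop atTop :=
        (tendsto_pow_atTop (by norm_num)).atTop_div_const (by norm_num)
      have := tendsto_neg_atTop_atBot.comp h
      exact this.congr fun x => by simp [Function.comp]; ring
    exact tendsto_of_tendsto_of_tendsto_of_le_of_le' tendsto_const_nhds hexp0 hlb hub
  have hderiv : ∀ x ∈ Ici a, HasDerivAt kF (kF' x) x := fun x _ => kHasDeriv x
  have key : ∫ x in Ioi a, kF' x = 0 - kF a :=
    integral_Ioi_of_hasDerivAt_of_nonpos' hderiv hneg htend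
  have hint : IntegrableOn kF' (Ioi a) :=
    integrableOn_Ioi_deriv_of_nonpos' hderiv hneg htend
  have hintexp : IntegrableOn (fun x => Real.exp (-x^2/2)) (Ioi a) := by
    have h := (integrable_exp_neg_mul_sq (by norm_num : (0:ℝ) < 1/2)).integrableOn
      (s := Ioi a)
    convert h using 2 with x
    ring_nf
  have hle : ∀ x ∈ Ioi a, -kF' x ≤ Real.exp (-x^2/2) := by
    intro x hx
    have hx0 : 0 < x := ha.trans hx
    have hs := kS_pos x
    have hs2 := kS_sq x
    have he : (0:ℝ) < Real.exp (-x^2/2) := Real.exp_pos _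
    have hA : (0:ℝ) < Real.sqrt (x^2+4) * (1 + x^2) := by positivity
    have hAB : (Real.sqrt (x^2+4) * (1 + x^2))^2 = (x^3+3*x)^2 + 4 := by nlinarith [hs2]
    have hkey : x^3 + 3*x ≤ Real.sqrt (x^2+4) * (1 + x^2) := by nlinarith [hA, hAB]
    have hQ : -2 ≤ (-x)*(Real.sqrt (x^2+4)-x) + (x/Real.sqrt (x^2+4)-1) := by
      have heq : (-x)*(Real.sqrt (x^2+4)-x) + (x/Real.sqrt (x^2+4)-1) + 2
          = (Real.sqrt (x^2+4) + x^2*Real.sqrt (x^2+4) - x^3 - 3*x)/Real.sqrt (x^2+4) := by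
        field_simp
        nlinarith [hs2]
      have hnum : 0 ≤ (Real.sqrt (x^2+4) + x^2*Real.sqrt (x^2+4) - x^3 - 3*x)/Real.sqrt (x^2+4) :=
        div_nonneg (by nlinarith [hkey]) hs.le
      linarith [heq ▸ hnum]
    unfold kF'
    nlinarith [mul_le_mul_of_nonneg_left hQ he.le]
  have mono : ∫ x in Ioi a, -kF' x ≤ ∫ x in Ioi a, Real.exp (-x^2/2) :=
    setIntegral_mono_on hint.neg hintexp measurableSet_Ioi hle
  rw [integral_neg, key] at mono
  have heqv : 2 * Real.exp (-a^2/2) / (Real.sqrt (a^2 + 4) + a) = kF a := by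
    have hs2 := kS_sq a
    have hpos : (0:ℝ) < Real.sqrt (a^2+4) + a := by positivity
    unfold kF
    rw [div_eq_div_iff hpos.ne' (by norm_num : (2:ℝ) ≠ 0)]
    nlinarith [hs2, Real.exp_pos (-a^2/2)]
  rw [MeasureTheory.integral_Ici_eq_integral_Ioi, heqv]
  linarith [mono]
end

section
/- For every N ≥ 1, the Poisson tail weight satisfies ∑_{n : |n - N| > √(2N log N)} e^{-N} N^n / n! = O(N^{-1}); precisely, there exist constants C > 0 and N₀ such that for all N ≥ N₀, ∑_{n ∉ [N - √(2N log N), N + √(2N log N)]} e^{-N} N^n / n! ≤ C / N. -/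
open Real Filter Set

noncomputable def pf (x : ℝ) (n : ℕ) : ℝ := Real.exp (-x) * x ^ n / (Nat.factorial n : ℝ)

lemma pf_nonneg {x : ℝ} (hx : 0 ≤ x) (n : ℕ) : 0 ≤ pf x n := by
  unfold pf; positivity

lemma pf_summable (x : ℝ) : Summable (pf x) := by
  have h := (Real.summable_pow_div_factorial x).mul_left (Real.exp (-x))
  exact h.congr fun n => by unfold pf; ring

lemma pf_succ (x : ℝ) (j : ℕ) : pf x (j + 1) = pf x j * (x / (j + 1)) := by
  have h1 : ((j:ℝ) + 1) ≠ 0 := by positivity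
  have h2 : ((Nat.factorial j : ℕ) : ℝ) ≠ 0 := Nat.cast_ne_zero.2 (Nat.factorial_ne_zero j)
  unfold pf
  rw [Nat.factorial_succ]
  push_cast
  field_simp
  ring

lemma pf_up {x : ℝ} {m : ℕ} (hx : 0 ≤ x) (hm : x < m) (k : ℕ) :
    pf x (m + k) ≤ pf x m * (x / m) ^ k := by
  have hm0 : (0:ℝ) < m := lt_of_le_of_lt hx hm
  induction k with
  | zero => simp
  | succ k ih =>
      have h1 : pf x (m + (k+1)) = pf x (m + k) * (x / ((m:ℝ) + k + 1)) := by
        rw [show m + (k+1) = (m+k)+1 from rfl, pf_succ]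
        push_cast
        ring_nf
      have hr : x / ((m:ℝ) + k + 1) ≤ x / m := by
        gcongr
        · linarith
      calc pf x (m + (k+1)) = pf x (m + k) * (x / ((m:ℝ) + k + 1)) := h1
        _ ≤ (pf x m * (x / m) ^ k) * (x / m) := by
            apply mul_le_mul ih hr (by positivity)
            have := pf_nonneg hx m
            positivity
        _ = pf x m * (x / m) ^ (k+1) := by rw [pow_succ]; ring

lemma pf_down {x : ℝ} {m : ℕ} (hx : 0 < x) : ∀ k, k ≤ m → pf x (m - k) ≤ pf x m * ((m:ℝ) / x) ^ k := by
  intro k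
  induction k with
  | zero => simp
  | succ k ih =>
      intro hk
      have hk' : k ≤ m := by omega
      have hj : m - k = (m - (k+1)) + 1 := by omega
      have e1 : pf x (m - (k+1)) = pf x (m - k) * (((m:ℝ) - k) / x) := by
        rw [hj, pf_succ]
        have hc : ((m - (k+1) : ℕ) : ℝ) + 1 = (m:ℝ) - k := by
          have : ((m - (k+1) : ℕ) : ℝ) = (m:ℝ) - k - 1 := by
            push_cast [Nat.cast_sub hk]
            ring
          rw [this]; ring
        rw [hc]
        have hne : (m:ℝ) - k ≠ 0 := by
          have : (k:ℝ) + 1 ≤ (m:ℝ) := by exact_mod_cast hk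
          intro h; nlinarith
        field_simp
      rw [e1]
      have hr : ((m:ℝ) - k) / x ≤ (m:ℝ) / x := by
        apply (div_le_div_iff_of_pos_right hx).2
        have : (0:ℝ) ≤ k := Nat.cast_nonneg k
        linarith
      calc pf x (m - k) * (((m:ℝ) - k) / x)
          ≤ (pf x m * ((m:ℝ)/x) ^ k) * ((m:ℝ)/x) := by
            apply mul_le_mul (ih hk') hr
            · have h1 : (k:ℝ) + 1 ≤ (m:ℝ) := by exact_mod_cast hk
              have h2 : (0:ℝ) ≤ k := Nat.cast_nonneg k
              apply div_nonneg (by linarith) hx.le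
            · have := pf_nonneg hx.le m
              positivity
        _ = pf x m * ((m:ℝ)/x) ^ (k+1) := by rw [pow_succ]; ring


lemma stirling_lower : ∃ n₀ : ℕ, 1 ≤ n₀ ∧ ∀ n, n₀ ≤ n →
    Real.sqrt (2*n) * ((n:ℝ)/Real.exp 1)^n ≤ (Nat.factorial n : ℝ) := by
  have h := Stirling.tendsto_stirlingSeq_sqrt_pi
  have hgt : (1:ℝ) < Real.sqrt π := by
    rw [show (1:ℝ) = Real.sqrt 1 from (Real.sqrt_one).symm]
    exact Real.sqrt_lt_sqrt (by norm_num) (by linarith [Real.pi_gt_three])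
  have hev : ∀ᶠ n in atTop, 1 ≤ Stirling.stirlingSeq n := h.eventually_const_le hgt
  obtain ⟨n₁, hn₁⟩ := eventually_atTop.1 hev
  refine ⟨max n₁ 1, le_max_right _ _, fun n hn => ?_⟩
  have hn1 : 1 ≤ n := le_trans (le_max_right _ _) hn
  have hs := hn₁ n (le_trans (le_max_left _ _) hn)
  have hn0 : (0:ℝ) < n := by exact_mod_cast hn1
  have hd : 0 < Real.sqrt (2*n) * ((n:ℝ)/Real.exp 1)^n := by positivity
  refine (one_le_div hd).1 ?_
  simpa [Stirling.stirlingSeq] using hs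

lemma pf_le_exp {x : ℝ} {n : ℕ} (hx : 0 < x) (hn : 1 ≤ n)
    (hst : Real.sqrt (2*n) * ((n:ℝ)/Real.exp 1)^n ≤ (Nat.factorial n : ℝ)) :
    pf x n ≤ Real.exp (-x + n + n*(Real.log x - Real.log n)) / Real.sqrt (2*n) := by
  have hn0 : (0:ℝ) < n := by exact_mod_cast hn
  have hd : 0 < Real.sqrt (2*n) * ((n:ℝ)/Real.exp 1)^n := by positivity
  have h1 : pf x n ≤ Real.exp (-x) * x^n / (Real.sqrt (2*n) * ((n:ℝ)/Real.exp 1)^n) := by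
    unfold pf
    gcongr
  refine le_trans h1 (le_of_eq ?_)
  have hxn : x ^ n = Real.exp (n * Real.log x) := by
    rw [← Real.log_pow, Real.exp_log (pow_pos hx n)]
  have hen : ((n:ℝ)/Real.exp 1)^n = Real.exp ((n:ℝ) * Real.log n - n) := by
    have h2 : Real.log (((n:ℝ)/Real.exp 1)^n) = (n:ℝ) * Real.log n - n := by
      rw [Real.log_pow, Real.log_div (ne_of_gt hn0) (Real.exp_ne_zero 1), Real.log_exp]
      ring
    rw [← Real.exp_log (pow_pos (div_pos hn0 (Real.exp_pos 1)) n), h2]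
  rw [hxn, hen, ← Real.exp_add, mul_comm (Real.sqrt (2*(n:ℝ))), ← div_div, ← Real.exp_sub]
  congr 1
  ring

lemma log_lb {y : ℝ} (h0 : 0 ≤ y) (h1 : y ≤ 1/2) : y - y^2/2 - 2*y^3 ≤ Real.log (1+y) := by
  have habs : |(-y)| < 1 := by rw [abs_neg, abs_of_nonneg h0]; linarith
  have h := Real.abs_log_sub_add_sum_range_le habs 2
  have hsum : (∑ i ∈ Finset.range 2, (-y) ^ (i + 1) / ((i:ℝ) + 1)) = -y + y^2/2 := by
    simp [Finset.sum_range_succ]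
    ring
  rw [hsum, show (1:ℝ) - -y = 1 + y by ring, abs_neg, abs_of_nonneg h0] at h
  have hb : y^(2+1)/(1-y) ≤ 2*y^3 := by
    rw [div_le_iff₀ (by linarith)]
    have h3 : (0:ℝ) ≤ y^3*(1-2*y) := mul_nonneg (pow_nonneg h0 3) (by linarith)
    linarith [h3, show 2*y^3*(1-y) - y^(2+1) = y^3*(1-2*y) from by ring]
  have := (abs_le.1 h).1
  linarith

lemma log_ub {y : ℝ} (h0 : 0 ≤ y) (h1 : y ≤ 1/2) : -Real.log (1-y) ≤ y + y^2/2 + 2*y^3 := by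
  have habs : |y| < 1 := by rw [abs_of_nonneg h0]; linarith
  have h := Real.abs_log_sub_add_sum_range_le habs 2
  have hsum : (∑ i ∈ Finset.range 2, y ^ (i + 1) / ((i:ℝ) + 1)) = y + y^2/2 := by
    simp [Finset.sum_range_succ]
    ring
  rw [hsum, abs_of_nonneg h0] at h
  have hb : y^(2+1)/(1-y) ≤ 2*y^3 := by
    rw [div_le_iff₀ (by linarith)]
    have h3 : (0:ℝ) ≤ y^3*(1-2*y) := mul_nonneg (pow_nonneg h0 3) (by linarith)
    linarith [h3, show 2*y^3*(1-y) - y^(2+1) = y^3*(1-2*y) from by ring]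
  have := (abs_le.1 h).1
  linarith

lemma expo_up {x u : ℝ} (hx : 0 < x) (hu : 0 ≤ u) (hux : u ≤ x/2) :
    -x + (x+u) + (x+u)*(Real.log x - Real.log (x+u)) ≤ -u^2/(2*x) + 3*u^3/x^2 + 2*u^4/x^3 := by
  have hy0 : 0 ≤ u/x := div_nonneg hu hx.le
  have hy1 : u/x ≤ 1/2 := by rw [div_le_iff₀ hx]; linarith
  have hlog := log_lb hy0 hy1
  have hxu : 0 < x + u := by linarith
  have hrw : Real.log x - Real.log (x+u) = -Real.log (1 + u/x) := by
    rw [show (1:ℝ) + u/x = (x+u)/x by field_simp, Real.log_div (ne_of_gt hxu) (ne_of_gt hx)]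
    ring
  rw [hrw]
  have hmul := mul_le_mul_of_nonneg_left hlog (le_of_lt hxu)
  have hexp : (x+u) * (u/x - (u/x)^2/2 - 2*(u/x)^3)
      = u + u^2/(2*x) - (5/2)*u^3/x^2 - 2*u^4/x^3 := by
    field_simp
    ring
  rw [hexp] at hmul
  have hslack : 0 ≤ u^3/x^2 := by positivity
  ring_nf at hmul hslack ⊢
  linarith

lemma expo_down {x s : ℝ} (hx : 0 < x) (hs : 0 ≤ s) (hsx : s ≤ x/2) :
    -x + (x-s) + (x-s)*(Real.log x - Real.log (x-s)) ≤ -s^2/(2*x) + 3*s^3/x^2 := by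
  have hy0 : 0 ≤ s/x := div_nonneg hs hx.le
  have hy1 : s/x ≤ 1/2 := by rw [div_le_iff₀ hx]; linarith
  have hlog := log_ub hy0 hy1
  have hxs : 0 < x - s := by linarith
  have hrw : Real.log x - Real.log (x-s) = -Real.log (1 - s/x) := by
    rw [show (1:ℝ) - s/x = (x-s)/x by field_simp, Real.log_div (ne_of_gt hxs) (ne_of_gt hx)]
    ring
  rw [hrw]
  have hmul := mul_le_mul_of_nonneg_left hlog (le_of_lt hxs)
  have hexp : (x-s) * (s/x + (s/x)^2/2 + 2*(s/x)^3)
      = s - s^2/(2*x) + (3/2)*s^3/x^2 - 2*s^4/x^3 := by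
    field_simp
    ring
  rw [hexp] at hmul
  have h4 : 0 ≤ s^4/x^3 := by positivity
  have h3 : 0 ≤ s^3/x^2 := by positivity
  ring_nf at hmul h4 h3 ⊢
  linarith


lemma evt_conds : ∀ᶠ (x:ℝ) in atTop,
    1 ≤ Real.log x ∧
    Real.sqrt (2*x*Real.log x) + 1 ≤ x/2 ∧
    3*(Real.sqrt (2*x*Real.log x)+1)^3 ≤ x^2/2 ∧
    2*(Real.sqrt (2*x*Real.log x)+1)^4 ≤ x^3/2 := by
  have hL : ∀ᶠ (x:ℝ) in atTop, Real.log x ≤ x^(1/9:ℝ) := by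
    have h := (isLittleO_log_rpow_atTop (by norm_num : (0:ℝ) < 1/9)).def one_pos
    filter_upwards [h, eventually_ge_atTop (1:ℝ)] with x hx hx1
    have h1 : Real.log x ≤ |Real.log x| := le_abs_self _
    have h2 : |x^(1/9:ℝ)| = x^(1/9:ℝ) := abs_of_nonneg (Real.rpow_nonneg (by linarith) _)
    have h3 : |Real.log x| ≤ 1 * |x^(1/9:ℝ)| := hx
    rw [one_mul, h2] at h3
    exact le_trans h1 h3
  have h1 : ∀ᶠ (x:ℝ) in atTop, 1 ≤ Real.log x := Real.tendsto_log_atTop.eventually_ge_atTop 1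
  have h49 : ∀ᶠ (x:ℝ) in atTop, (12:ℝ) ≤ x^(4/9:ℝ) :=
    (tendsto_rpow_atTop (by norm_num)).eventually_ge_atTop 12
  have h13 : ∀ᶠ (x:ℝ) in atTop, (162:ℝ) ≤ x^(1/3:ℝ) :=
    (tendsto_rpow_atTop (by norm_num)).eventually_ge_atTop 162
  have h79 : ∀ᶠ (x:ℝ) in atTop, (324:ℝ) ≤ x^(7/9:ℝ) :=
    (tendsto_rpow_atTop (by norm_num)).eventually_ge_atTop 324
  filter_upwards [hL, h1, h49, h13, h79, eventually_ge_atTop (1:ℝ)] with x hL h1 h49 h13 h79 hx1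
  have hx0 : (0:ℝ) < x := by linarith
  -- t ≤ 2 * x^(5/9)
  have hr59 : (1:ℝ) ≤ x^(5/9:ℝ) := Real.one_le_rpow hx1 (by norm_num)
  have ht : Real.sqrt (2*x*Real.log x) ≤ 2*x^(5/9:ℝ) := by
    have hb : 2*x*Real.log x ≤ 2*x^(10/9:ℝ) := by
      have : x*Real.log x ≤ x*x^(1/9:ℝ) := by
        apply mul_le_mul_of_nonneg_left hL hx0.le
      have hxx : x*x^(1/9:ℝ) = x^(10/9:ℝ) := by
        nth_rewrite 1 [← Real.rpow_one x]
        rw [← Real.rpow_add hx0]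
        norm_num
      linarith [this, hxx ▸ this]
    calc Real.sqrt (2*x*Real.log x) ≤ Real.sqrt (2*x^(10/9:ℝ)) := Real.sqrt_le_sqrt hb
      _ = Real.sqrt 2 * Real.sqrt (x^(10/9:ℝ)) := Real.sqrt_mul (by norm_num) _
      _ ≤ 2 * x^(5/9:ℝ) := by
          apply mul_le_mul
          · nlinarith [Real.sq_sqrt (show (0:ℝ) ≤ 2 by norm_num), Real.sqrt_nonneg 2]
          · rw [Real.sqrt_eq_rpow, ← Real.rpow_mul hx0.le]
            norm_num
          · exact Real.sqrt_nonneg _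
          · norm_num
  have hu : Real.sqrt (2*x*Real.log x) + 1 ≤ 3*x^(5/9:ℝ) := by linarith
  have hunn : (0:ℝ) ≤ Real.sqrt (2*x*Real.log x) + 1 := by positivity
  refine ⟨h1, ?_, ?_, ?_⟩
  · -- t + 1 ≤ x/2
    have hxeq : x^(4/9:ℝ) * x^(5/9:ℝ) = x := by
      rw [← Real.rpow_add hx0]; norm_num
    have h12 : 12 * x^(5/9:ℝ) ≤ x^(4/9:ℝ) * x^(5/9:ℝ) := by
      apply mul_le_mul_of_nonneg_right h49 (by positivity)
    rw [hxeq] at h12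
    linarith
  · -- 3*(t+1)^3 ≤ x^2/2
    have hcube : (Real.sqrt (2*x*Real.log x)+1)^3 ≤ (3*x^(5/9:ℝ))^3 := by
      exact pow_le_pow_left₀ hunn hu 3
    have hc2 : (3*x^(5/9:ℝ))^3 = 27 * x^(5/3:ℝ) := by
      rw [mul_pow, ← Real.rpow_natCast (x^(5/9:ℝ)) 3, ← Real.rpow_mul hx0.le]
      norm_num
    have hx2 : x^(1/3:ℝ) * x^(5/3:ℝ) = x^2 := by
      rw [← Real.rpow_natCast x 2, ← Real.rpow_add hx0]
      norm_num
    have hfin : 162 * x^(5/3:ℝ) ≤ x^(1/3:ℝ) * x^(5/3:ℝ) := by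
      apply mul_le_mul_of_nonneg_right h13 (by positivity)
    rw [hc2] at hcube
    rw [hx2] at hfin
    linarith
  · -- 2*(t+1)^4 ≤ x^3/2
    have hq : (Real.sqrt (2*x*Real.log x)+1)^4 ≤ (3*x^(5/9:ℝ))^4 := by
      exact pow_le_pow_left₀ hunn hu 4
    have hc2 : (3*x^(5/9:ℝ))^4 = 81 * x^(20/9:ℝ) := by
      rw [mul_pow, ← Real.rpow_natCast (x^(5/9:ℝ)) 4, ← Real.rpow_mul hx0.le]
      norm_num
    have hx3 : x^(7/9:ℝ) * x^(20/9:ℝ) = x^3 := by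
      rw [← Real.rpow_natCast x 3, ← Real.rpow_add hx0]
      norm_num
    have hfin : 324 * x^(20/9:ℝ) ≤ x^(7/9:ℝ) * x^(20/9:ℝ) := by
      apply mul_le_mul_of_nonneg_right h79 (by positivity)
    rw [hc2] at hq
    rw [hx3] at hfin
    linarith

set_option maxHeartbeats 2000000 in
theorem poisson_tail_weight :
    ∃ C > 0, ∃ N₀ : ℕ, ∀ N : ℕ, N₀ ≤ N →
      (∑' n : {n : ℕ // (n : ℝ) < N - Real.sqrt (2 * N * Real.log N) ∨
          (N : ℝ) + Real.sqrt (2 * N * Real.log N) < n},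
        Real.exp (-(N : ℝ)) * (N : ℝ)^(n : ℕ) / Nat.factorial n) ≤ C / N := by
  obtain ⟨n₀, hn₀1, hstir⟩ := stirling_lower
  refine ⟨6, by norm_num, ?_⟩
  have hev : ∀ᶠ (N:ℕ) in atTop,
      (∑' n : {n : ℕ // (n : ℝ) < N - Real.sqrt (2 * N * Real.log N) ∨
          (N : ℝ) + Real.sqrt (2 * N * Real.log N) < n},
        Real.exp (-(N : ℝ)) * (N : ℝ)^(n : ℕ) / Nat.factorial n) ≤ 6 / N := by
    filter_upwards [tendsto_natCast_atTop_atTop.eventually evt_conds,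
        eventually_ge_atTop (2*n₀+4), eventually_ge_atTop 4] with N hc hN₀ hN4
    obtain ⟨hlog1, h2, h3, h4⟩ := hc
    set x : ℝ := (N:ℝ) with hxdef
    set t : ℝ := Real.sqrt (2 * x * Real.log x) with htdef
    have hx4 : (4:ℝ) ≤ x := by rw [hxdef]; exact_mod_cast hN4
    have hx0 : (0:ℝ) < x := by linarith
    have hx1 : (1:ℝ) ≤ x := by linarith
    have ht0 : 0 ≤ t := Real.sqrt_nonneg _
    have ht2 : t^2 = 2*x*Real.log x := Real.sq_sqrt (by nlinarith)
    have ht2x : Real.sqrt (2*x) ≤ t := Real.sqrt_le_sqrt (by nlinarith)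
    have hN₀' : (2*(n₀:ℝ)+4) ≤ x := by
      rw [hxdef]
      have : ((2*n₀+4 : ℕ):ℝ) ≤ (N:ℝ) := Nat.cast_le.2 hN₀
      push_cast at this
      linarith
    have hsqrt2 : (1:ℝ) ≤ Real.sqrt 2 := by
      rw [show (1:ℝ) = Real.sqrt 1 by simp]
      exact Real.sqrt_le_sqrt (by norm_num)
    -- upper index m
    set m : ℕ := ⌊x + t⌋₊ + 1 with hmdef
    have hm_gt : x + t < (m:ℝ) := by
      have := Nat.lt_floor_add_one (x + t)
      rw [hmdef]
      push_cast
      exact this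
    have hm_le : (m:ℝ) ≤ x + t + 1 := by
      have := Nat.floor_le (show (0:ℝ) ≤ x + t by positivity)
      rw [hmdef]
      push_cast
      linarith
    have hxm : x < (m:ℝ) := by linarith
    have hm0 : (0:ℝ) < m := lt_trans hx0 hxm
    have hm2x : (m:ℝ) ≤ 2*x := by linarith
    have hm1 : 1 ≤ m := Nat.le_add_left 1 _
    have hmn₀ : n₀ ≤ m := by
      have : (n₀:ℝ) ≤ (m:ℝ) := by linarith
      exact_mod_cast this
    -- lower index m'
    set m' : ℕ := ⌈x - t⌉₊ - 1 with hm'def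
    have hceil3 : 3 ≤ ⌈x - t⌉₊ := by
      have h23 : ((2:ℕ):ℝ) < x - t := by push_cast; linarith
      have := Nat.lt_ceil.2 h23
      omega
    have hm'succ : m' + 1 = ⌈x - t⌉₊ := by omega
    have hm'1 : 1 ≤ m' := by omega
    have hm'lt : (m':ℝ) < x - t := Nat.lt_ceil.1 (by omega)
    have hm'ge : x - t - 1 ≤ (m':ℝ) := by
      have h := Nat.le_ceil (x - t)
      rw [← hm'succ] at h
      push_cast at h
      linarith
    have hm'half : x/2 ≤ (m':ℝ) := by linarith
    have hm'0 : (0:ℝ) < m' := by linarith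
    have hm'ltx : (m':ℝ) < x := by linarith
    have hm'n₀ : n₀ ≤ m' := by
      have : (n₀:ℝ) ≤ (m':ℝ) := by linarith
      exact_mod_cast this
    -- summability
    have hsum := pf_summable x
    have hsL : Summable (Set.indicator {k : ℕ | (k:ℝ) < x - t} (pf x)) := hsum.indicator _
    have hsU : Summable (Set.indicator {k : ℕ | x + t < (k:ℝ)} (pf x)) := hsum.indicator _
    have heq : (∑' n : {n : ℕ // (n : ℝ) < x - t ∨ x + t < (n:ℝ)},
          Real.exp (-x) * x^(n : ℕ) / Nat.factorial n)
        = ∑' n : ℕ, Set.indicator {k : ℕ | (k:ℝ) < x - t ∨ x + t < (k:ℝ)} (pf x) n :=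
      tsum_subtype _ (pf x)
    rw [heq]
    have hLU : {k : ℕ | (k:ℝ) < x - t ∨ x + t < (k:ℝ)}
        = {k : ℕ | (k:ℝ) < x - t} ∪ {k : ℕ | x + t < (k:ℝ)} := rfl
    have hdisj : Disjoint {k : ℕ | (k:ℝ) < x - t} {k : ℕ | x + t < (k:ℝ)} := by
      rw [Set.disjoint_left]
      intro n hn1 hn2
      simp only [Set.mem_setOf_eq] at hn1 hn2
      linarith
    have hsplit : (∑' n : ℕ, Set.indicator {k : ℕ | (k:ℝ) < x - t ∨ x + t < (k:ℝ)} (pf x) n)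
        = (∑' n : ℕ, Set.indicator {k : ℕ | (k:ℝ) < x - t} (pf x) n)
          + (∑' n : ℕ, Set.indicator {k : ℕ | x + t < (k:ℝ)} (pf x) n) := by
      rw [hLU, Set.indicator_union_of_disjoint hdisj]
      exact Summable.tsum_add hsL hsU
    rw [hsplit]
    -- UPPER TAIL
    have hUineq : (∑' n : ℕ, Set.indicator {k : ℕ | x + t < (k:ℝ)} (pf x) n) ≤ 3 / x := by
      have hUIci : {k : ℕ | x + t < (k:ℝ)} = Set.Ici m := by
        ext n
        simp only [Set.mem_setOf_eq, Set.mem_Ici]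
        constructor
        · intro h
          have hfl : (⌊x + t⌋₊:ℝ) ≤ x + t := Nat.floor_le (by positivity)
          have h2' : (⌊x+t⌋₊:ℝ) < (n:ℝ) := lt_of_le_of_lt hfl h
          have h3' : ⌊x+t⌋₊ < n := by exact_mod_cast h2'
          omega
        · intro h
          have : (m:ℝ) ≤ (n:ℝ) := by exact_mod_cast h
          linarith
      rw [hUIci]
      have hinj : Function.Injective (fun k : ℕ => m + k) := fun a b h => by
        simpa using h
      have hUeq : (∑' n : ℕ, Set.indicator (Set.Ici m) (pf x) n) = ∑' k : ℕ, pf x (m + k) := by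
        have hsupp : Function.support (Set.indicator (Set.Ici m) (pf x))
            ⊆ Set.range (fun k : ℕ => m + k) := by
          intro n hn
          have hmem : n ∈ Set.Ici m := by
            by_contra hcon
            exact hn (Set.indicator_of_notMem hcon _)
          simp only [Set.mem_Ici] at hmem
          exact ⟨n - m, show m + (n - m) = n by omega⟩
        have hte := hinj.tsum_eq (f := Set.indicator (Set.Ici m) (pf x)) hsupp
        rw [← hte]
        congr 1
        funext k
        exact Set.indicator_of_mem (by simp [Set.mem_Ici]) _
      rw [hUeq]
      have hr0 : 0 ≤ x/(m:ℝ) := by positivity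
      have hr1 : x/(m:ℝ) < 1 := (div_lt_one hm0).2 hxm
      have hsum1 : Summable (fun k => pf x (m+k)) := hsum.comp_injective hinj
      have hsum2 : Summable (fun k : ℕ => pf x m * (x/(m:ℝ))^k) :=
        (summable_geometric_of_lt_one hr0 hr1).mul_left _
      have hgeo : (∑' k : ℕ, pf x (m+k)) ≤ pf x m * (1 - x/(m:ℝ))⁻¹ := by
        calc (∑' k : ℕ, pf x (m+k)) ≤ ∑' k : ℕ, pf x m * (x/(m:ℝ))^k :=
              Summable.tsum_le_tsum (pf_up hx0.le hxm) hsum1 hsum2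
          _ = pf x m * (1 - x/(m:ℝ))⁻¹ := by
              rw [tsum_mul_left, tsum_geometric_of_lt_one hr0 hr1]
      -- Stirling bound on pf x m
      have hpm := pf_le_exp hx0 hm1 (hstir m hmn₀)
      have hu_lb : t < (m:ℝ) - x := by linarith
      have hu0 : (0:ℝ) ≤ (m:ℝ) - x := by linarith
      have hu_ub : (m:ℝ) - x ≤ t + 1 := by linarith
      have hu_x : (m:ℝ) - x ≤ x/2 := by linarith
      have hexpo := expo_up hx0 hu0 hu_x
      rw [show x + ((m:ℝ) - x) = (m:ℝ) by ring] at hexpo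
      have e1 : Real.log x ≤ ((m:ℝ)-x)^2/(2*x) := by
        have htu : t^2 ≤ ((m:ℝ)-x)^2 := pow_le_pow_left₀ ht0 (le_of_lt hu_lb) 2
        have he : t^2/(2*x) = Real.log x := by rw [ht2]; field_simp
        have hd := (div_le_div_iff_of_pos_right (show (0:ℝ) < 2*x by linarith)).2 htu
        rw [he] at hd
        exact hd
      have e2 : 3*((m:ℝ)-x)^3/x^2 ≤ 1/2 := by
        rw [div_le_iff₀ (by positivity)]
        have hcube : ((m:ℝ)-x)^3 ≤ (t+1)^3 := pow_le_pow_left₀ hu0 hu_ub 3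
        nlinarith [h3]
      have e3 : 2*((m:ℝ)-x)^4/x^3 ≤ 1/2 := by
        rw [div_le_iff₀ (by positivity)]
        have hq : ((m:ℝ)-x)^4 ≤ (t+1)^4 := pow_le_pow_left₀ hu0 hu_ub 4
        nlinarith [h4]
      have hexp_le : -x + (m:ℝ) + (m:ℝ)*(Real.log x - Real.log (m:ℝ)) ≤ 1 - Real.log x := by
        refine le_trans hexpo ?_
        have : -((m:ℝ)-x)^2/(2*x) + 3*((m:ℝ)-x)^3/x^2 + 2*((m:ℝ)-x)^4/x^3
            ≤ 1 - Real.log x := by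
          ring_nf at e1 e2 e3 ⊢
          linarith
        exact this
      have hpm2 : pf x m ≤ Real.exp (1 - Real.log x) / Real.sqrt (2*(m:ℝ)) := by
        refine le_trans hpm ?_
        exact (div_le_div_iff_of_pos_right (by positivity)).2 (Real.exp_le_exp.2 hexp_le)
      have hexp1 : Real.exp (1 - Real.log x) = Real.exp 1 / x := by
        rw [Real.exp_sub, Real.exp_log hx0]
      have hsm : Real.sqrt (m:ℝ) ≤ (m:ℝ) - x := by
        have h1 : Real.sqrt (m:ℝ) ≤ Real.sqrt (2*x) := Real.sqrt_le_sqrt (by linarith)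
        linarith
      have hkey : (m:ℝ) ≤ Real.sqrt (2*(m:ℝ)) * ((m:ℝ) - x) := by
        have h1 : Real.sqrt (2*(m:ℝ)) * Real.sqrt (m:ℝ)
            ≤ Real.sqrt (2*(m:ℝ)) * ((m:ℝ) - x) :=
          mul_le_mul_of_nonneg_left hsm (Real.sqrt_nonneg _)
        have h2' : Real.sqrt (2*(m:ℝ)) * Real.sqrt (m:ℝ) = Real.sqrt 2 * (m:ℝ) := by
          rw [← Real.sqrt_mul (by positivity : (0:ℝ) ≤ 2*(m:ℝ)) (m:ℝ),
            show (2*(m:ℝ))*(m:ℝ) = 2*(m:ℝ)^2 by ring,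
            Real.sqrt_mul (by norm_num : (0:ℝ) ≤ 2), Real.sqrt_sq hm0.le]
        have h3' : 1 * (m:ℝ) ≤ Real.sqrt 2 * (m:ℝ) :=
          mul_le_mul_of_nonneg_right hsqrt2 hm0.le
        linarith
      have hne3 : (0:ℝ) < (m:ℝ) - x := by linarith
      have hgeoinv : (1 - x/(m:ℝ))⁻¹ = (m:ℝ)/((m:ℝ) - x) := by
        rw [one_sub_div (ne_of_gt hm0), inv_div]
      calc (∑' k : ℕ, pf x (m+k)) ≤ pf x m * (1 - x/(m:ℝ))⁻¹ := hgeo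
        _ ≤ (Real.exp (1 - Real.log x) / Real.sqrt (2*(m:ℝ))) * (1 - x/(m:ℝ))⁻¹ := by
            apply mul_le_mul_of_nonneg_right hpm2
            rw [hgeoinv]
            positivity
        _ = (Real.exp 1 / x) * ((m:ℝ)/(Real.sqrt (2*(m:ℝ)) * ((m:ℝ) - x))) := by
            rw [hexp1, hgeoinv]
            have hs0 : Real.sqrt (2*(m:ℝ)) ≠ 0 := by positivity
            field_simp
        _ ≤ (Real.exp 1 / x) * 1 := by
            apply mul_le_mul_of_nonneg_left _ (by positivity)
            rw [div_le_one (mul_pos (by positivity) hne3)]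
            exact hkey
        _ ≤ 3 / x := by
            rw [mul_one]
            have : Real.exp 1 ≤ 3 := by
              have := Real.exp_one_lt_d9
              linarith
            exact (div_le_div_iff_of_pos_right hx0).2 this
    -- LOWER TAIL
    have hLineq : (∑' n : ℕ, Set.indicator {k : ℕ | (k:ℝ) < x - t} (pf x) n) ≤ 3 / x := by
      have hfin : ∀ n ∉ Finset.range (m'+1),
          Set.indicator {k : ℕ | (k:ℝ) < x - t} (pf x) n = 0 := by
        intro n hn
        simp only [Finset.mem_range, not_lt] at hn
        apply Set.indicator_of_notMem
        simp only [Set.mem_setOf_eq, not_lt]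
        have h1 : ((m'+1 : ℕ):ℝ) ≤ (n:ℝ) := by exact_mod_cast hn
        have h2' : (x - t) ≤ ((m'+1:ℕ):ℝ) := by
          rw [hm'succ]
          exact Nat.le_ceil _
        push_cast at h1 h2' ⊢
        linarith
      rw [tsum_eq_sum hfin]
      have hstep1 : ∑ n ∈ Finset.range (m'+1), Set.indicator {k : ℕ | (k:ℝ) < x - t} (pf x) n
          ≤ ∑ n ∈ Finset.range (m'+1), pf x n :=
        Finset.sum_le_sum fun n _ => Set.indicator_le_self' (fun k _ => pf_nonneg hx0.le k) n
      have hrefl := Finset.sum_range_reflect (fun j => pf x j) (m'+1)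
      simp only [Nat.add_sub_cancel] at hrefl
      have hr0 : 0 ≤ (m':ℝ)/x := by positivity
      have hr1 : (m':ℝ)/x < 1 := (div_lt_one hx0).2 hm'ltx
      have hstep3 : ∑ k ∈ Finset.range (m'+1), pf x (m' - k)
          ≤ ∑ k ∈ Finset.range (m'+1), pf x m' * ((m':ℝ)/x)^k :=
        Finset.sum_le_sum fun k hk =>
          pf_down hx0 k (by simpa [Nat.lt_succ_iff] using hk)
      have hstep4 : ∑ k ∈ Finset.range (m'+1), pf x m' * ((m':ℝ)/x)^k
          ≤ pf x m' * (1 - (m':ℝ)/x)⁻¹ := by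
        rw [← Finset.mul_sum]
        apply mul_le_mul_of_nonneg_left _ (pf_nonneg hx0.le m')
        calc ∑ k ∈ Finset.range (m'+1), ((m':ℝ)/x)^k
            ≤ ∑' k : ℕ, ((m':ℝ)/x)^k :=
              Summable.sum_le_tsum _ (fun k _ => by positivity) (summable_geometric_of_lt_one hr0 hr1)
          _ = (1 - (m':ℝ)/x)⁻¹ := tsum_geometric_of_lt_one hr0 hr1
      -- Stirling on m'
      have hpm' := pf_le_exp hx0 hm'1 (hstir m' hm'n₀)
      have hs_lb : t < x - (m':ℝ) := by linarith
      have hs0 : (0:ℝ) ≤ x - (m':ℝ) := by linarith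
      have hs_ub : x - (m':ℝ) ≤ t + 1 := by linarith
      have hs_x : x - (m':ℝ) ≤ x/2 := by linarith
      have hexpo' := expo_down hx0 hs0 hs_x
      rw [show x - (x - (m':ℝ)) = (m':ℝ) by ring] at hexpo'
      have e1' : Real.log x ≤ (x-(m':ℝ))^2/(2*x) := by
        have htu : t^2 ≤ (x-(m':ℝ))^2 := pow_le_pow_left₀ ht0 (le_of_lt hs_lb) 2
        have he : t^2/(2*x) = Real.log x := by rw [ht2]; field_simp
        have hd := (div_le_div_iff_of_pos_right (show (0:ℝ) < 2*x by linarith)).2 htu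
        rw [he] at hd
        exact hd
      have e2' : 3*(x-(m':ℝ))^3/x^2 ≤ 1/2 := by
        rw [div_le_iff₀ (by positivity)]
        have hcube : (x-(m':ℝ))^3 ≤ (t+1)^3 := pow_le_pow_left₀ hs0 hs_ub 3
        nlinarith [h3]
      have hexp_le' : -x + (m':ℝ) + (m':ℝ)*(Real.log x - Real.log (m':ℝ)) ≤ 1 - Real.log x := by
        refine le_trans hexpo' ?_
        have : -(x-(m':ℝ))^2/(2*x) + 3*(x-(m':ℝ))^3/x^2 ≤ 1 - Real.log x := by
          ring_nf at e1' e2' ⊢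
          linarith
        exact this
      have hpm2' : pf x m' ≤ Real.exp (1 - Real.log x) / Real.sqrt (2*(m':ℝ)) := by
        refine le_trans hpm' ?_
        exact (div_le_div_iff_of_pos_right (by positivity)).2 (Real.exp_le_exp.2 hexp_le')
      have hexp1 : Real.exp (1 - Real.log x) = Real.exp 1 / x := by
        rw [Real.exp_sub, Real.exp_log hx0]
      have hsx' : Real.sqrt x ≤ Real.sqrt (2*(m':ℝ)) := Real.sqrt_le_sqrt (by linarith)
      have hsx2 : Real.sqrt (2*x) ≤ x - (m':ℝ) := by linarith
      have hkey' : x ≤ Real.sqrt (2*(m':ℝ)) * (x - (m':ℝ)) := by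
        have h1 : Real.sqrt x * Real.sqrt (2*x)
            ≤ Real.sqrt (2*(m':ℝ)) * (x - (m':ℝ)) :=
          mul_le_mul hsx' hsx2 (Real.sqrt_nonneg _) (Real.sqrt_nonneg _)
        have h2'' : Real.sqrt x * Real.sqrt (2*x) = Real.sqrt 2 * x := by
          rw [← Real.sqrt_mul hx0.le,
            show x * (2*x) = 2*x^2 by ring,
            Real.sqrt_mul (by norm_num : (0:ℝ) ≤ 2), Real.sqrt_sq hx0.le]
        have h3'' : 1 * x ≤ Real.sqrt 2 * x := mul_le_mul_of_nonneg_right hsqrt2 hx0.le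
        linarith
      have hne3' : (0:ℝ) < x - (m':ℝ) := by linarith
      have hgeoinv' : (1 - (m':ℝ)/x)⁻¹ = x/(x - (m':ℝ)) := by
        rw [one_sub_div (ne_of_gt hx0), inv_div]
      calc ∑ n ∈ Finset.range (m'+1), Set.indicator {k : ℕ | (k:ℝ) < x - t} (pf x) n
          ≤ ∑ n ∈ Finset.range (m'+1), pf x n := hstep1
        _ = ∑ k ∈ Finset.range (m'+1), pf x (m' - k) := hrefl.symm
        _ ≤ ∑ k ∈ Finset.range (m'+1), pf x m' * ((m':ℝ)/x)^k := hstep3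
        _ ≤ pf x m' * (1 - (m':ℝ)/x)⁻¹ := hstep4
        _ ≤ (Real.exp (1 - Real.log x) / Real.sqrt (2*(m':ℝ))) * (1 - (m':ℝ)/x)⁻¹ := by
            apply mul_le_mul_of_nonneg_right hpm2'
            rw [hgeoinv']
            positivity
        _ = (Real.exp 1 / x) * (x/(Real.sqrt (2*(m':ℝ)) * (x - (m':ℝ)))) := by
            rw [hexp1, hgeoinv']
            have hs0' : Real.sqrt (2*(m':ℝ)) ≠ 0 := by positivity
            field_simp
        _ ≤ (Real.exp 1 / x) * 1 := by
            apply mul_le_mul_of_nonneg_left _ (by positivity)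
            rw [div_le_one (mul_pos (by positivity) hne3')]
            exact hkey'
        _ ≤ 3 / x := by
            rw [mul_one]
            have : Real.exp 1 ≤ 3 := by
              have := Real.exp_one_lt_d9
              linarith
            exact (div_le_div_iff_of_pos_right hx0).2 this
    have h6 : (6:ℝ)/x = 3/x + 3/x := by ring
    rw [h6]
    exact add_le_add hLineq hUineq
  obtain ⟨N₀, hN₀⟩ := eventually_atTop.1 hev
  exact ⟨N₀, hN₀⟩
end

section
/- Setting n = N + x√N, the exponent in Stirling's approximation of the Poisson distribution satisfies -N + n - n log(n/N) = -x²/2 + x³/(6√N) - x⁴/(12N) + O(x⁵/N^{3/2}), uniformly for |x| ≤ √(2 log N); precisely, there is a constant C such that for all N ≥ 2 and |x| ≤ √(2 log N), |(-N + n - n log(n/N)) + x²/2 - x³/(6√N) + x⁴/(12N)| ≤ C |x|⁵ / N^{3/2}. -/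
lemma poly_bound (t : ℝ) (ht : |t| ≤ 429/500) :
    |t - (1+t)*Real.log (1+t) + t^2/2 - t^3/6 + t^4/12| ≤ 14 * |t|^5 := by
  have h1 : |(-t)| < 1 := by rw [abs_neg]; linarith [abs_nonneg t]
  have key := Real.abs_log_sub_add_sum_range_le h1 4
  rw [abs_neg] at key
  have hsum : (∑ i ∈ Finset.range 4, (-t) ^ (i + 1) / (i + 1))
      = -(t - t^2/2 + t^3/3 - t^4/4) := by
    simp [Finset.sum_range_succ]
    ring
  rw [hsum, sub_neg_eq_add] at key
  set r := Real.log (1+t) - (t - t^2/2 + t^3/3 - t^4/4) with hr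
  have hkey : |r| ≤ |t|^5 / (1 - |t|) := by
    have he : -(t - t^2/2 + t^3/3 - t^4/4) + Real.log (1+t) = r := by rw [hr]; ring
    rwa [he] at key
  have hr2 : |r| ≤ (500/71) * |t|^5 := by
    have h2 : (71:ℝ)/500 ≤ 1 - |t| := by linarith
    calc |r| ≤ |t|^5 / (1 - |t|) := hkey
    _ ≤ |t|^5 / (71/500) := by gcongr
    _ = (500/71) * |t|^5 := by ring
  have hlog : Real.log (1+t) = (t - t^2/2 + t^3/3 - t^4/4) + r := by rw [hr]; ring
  rw [hlog]
  have hrw : t - (1+t)*((t - t^2/2 + t^3/3 - t^4/4) + r) + t^2/2 - t^3/6 + t^4/12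
      = t^5/4 - (1+t)*r := by ring
  rw [hrw]
  have h3 : |t^5/4 - (1+t)*r| ≤ |t^5/4| + |(1+t)*r| := abs_sub _ _
  rw [abs_mul] at h3
  have h4 : |t^5/4| = |t|^5/4 := by rw [abs_div, abs_pow]; norm_num
  have h5 : |1+t| ≤ 929/500 := by
    have := abs_abs_sub_abs_le_abs_sub (1+t) 1
    have h6 := abs_add_le 1 t
    simp at h6
    calc |1+t| ≤ |1| + |t| := abs_add_le 1 t
    _ ≤ 929/500 := by rw [abs_one]; linarith
  have hpos : (0:ℝ) ≤ |t|^5 := by positivity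
  nlinarith [abs_nonneg r, mul_le_mul h5 hr2 (abs_nonneg r) (by norm_num : (0:ℝ) ≤ 929/500)]

theorem stirling_exponent_expansion :
    ∃ C : ℝ, 0 < C ∧ ∀ N x : ℝ, 2 ≤ N → |x| ≤ Real.sqrt (2 * Real.log N) →
      |(-N + (N + x * Real.sqrt N) -
          (N + x * Real.sqrt N) * Real.log ((N + x * Real.sqrt N) / N)) +
        x^2/2 - x^3/(6 * Real.sqrt N) + x^4/(12 * N)| ≤
        C * |x|^5 / N ^ ((3:ℝ)/2) := by
  refine ⟨14, by norm_num, ?_⟩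
  intro N x hN hx
  have hN0 : (0:ℝ) < N := by linarith
  set s := Real.sqrt N with hs
  have hs0 : 0 < s := Real.sqrt_pos.mpr hN0
  have hs2 : s^2 = N := Real.sq_sqrt hN0.le
  set t := x / s with htdef
  have hxts : x = t * s := by rw [htdef]; field_simp
  have hx2 : x^2 ≤ 2 * Real.log N := by
    have h0 : 0 ≤ 2 * Real.log N := by
      have : 0 ≤ Real.log N := Real.log_nonneg (by linarith)
      linarith
    have h1 := Real.sq_sqrt h0
    nlinarith [abs_nonneg x, sq_abs x, Real.sqrt_nonneg (2 * Real.log N)]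
  have hlogN : Real.log N ≤ N / Real.exp 1 := by
    have hpos : 0 < N / Real.exp 1 := div_pos hN0 (Real.exp_pos 1)
    have h := Real.log_le_sub_one_of_pos hpos
    rw [Real.log_div (ne_of_gt hN0) (Real.exp_ne_zero 1), Real.log_exp] at h
    linarith
  have he : (2.7182818283 : ℝ) < Real.exp 1 := Real.exp_one_gt_d9
  have ht2 : t^2 ≤ (429/500)^2 := by
    have heq : t^2 = x^2 / N := by rw [htdef, div_pow, hs2]
    have h1 : x^2 ≤ 2 * N / Real.exp 1 := by
      calc x^2 ≤ 2 * Real.log N := hx2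
      _ ≤ 2 * (N / Real.exp 1) := by linarith
      _ = 2 * N / Real.exp 1 := by ring
    rw [heq, div_le_iff₀ hN0]
    have hexp : 0 < Real.exp 1 := Real.exp_pos 1
    have h1' : x^2 * Real.exp 1 ≤ 2 * N := (le_div_iff₀ hexp).mp h1
    nlinarith [mul_pos hN0 (by linarith : (0:ℝ) < Real.exp 1 - 2.7182818283), sq_nonneg x]
  have ht : |t| ≤ 429/500 := by
    nlinarith [sq_abs t, abs_nonneg t]
  have hb := poly_bound t ht
  have harg : (N + x * s)/N = 1 + t := by
    rw [hxts, ← hs2]; field_simp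
  have hL : (-N + (N + x * s) - (N + x * s)*Real.log ((N + x * s)/N)) +
        x^2/2 - x^3/(6 * s) + x^4/(12 * N)
      = N * (t - (1+t)*Real.log (1+t) + t^2/2 - t^3/6 + t^4/12) := by
    rw [harg, hxts, ← hs2]; field_simp; ring
  have hR : N ^ ((3:ℝ)/2) = N * s := by
    rw [show ((3:ℝ)/2) = (1/2 : ℝ) * (3:ℕ) by norm_num, Real.rpow_mul hN0.le,
      Real.rpow_natCast, ← Real.sqrt_eq_rpow, ← hs]
    rw [show s^(3:ℕ) = s^2 * s by ring, hs2]
  rw [hL, hR, abs_mul, abs_of_pos hN0]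
  have hxabs : |x| = |t| * s := by rw [hxts, abs_mul, abs_of_pos hs0]
  have hRHS : 14 * |x|^5 / (N * s) = 14 * N * |t|^5 := by
    rw [hxabs, ← hs2]; field_simp
  rw [hRHS]
  calc N * |t - (1+t)*Real.log (1+t) + t^2/2 - t^3/6 + t^4/12| ≤ N * (14 * |t|^5) :=
        mul_le_mul_of_nonneg_left hb hN0.le
  _ = 14 * N * |t|^5 := by ring
end
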